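/- For all nonnegative integers x and y with x < y, one has S_{3,2}([x, y)) = S_{3,0}([x, y)) + S_{3,0}([2x, 2y)) − S_{3,0}([4x, 4y)). -/

import Mathlib

/-- binary digit sum -/
def sigma2 (n : ℕ) : ℕ := (Nat.digits 2 n).sum

/-- `S m l x = Σ_{0 ≤ n < x, n ≡ l (mod m)} (−1)^{σ(n)}` -/
def S (m l x : ℕ) : ℤ :=
  ∑ n ∈ (Finset.range x).filter (fun n => n % m = l), (-1 : ℤ) ^ sigma2 n

/-- `Sint m l x y = S_{m,l}([x,y)) = S_{m,l}(y) − S_{m,l}(x)` -/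
def Sint (m l x y : ℕ) : ℤ := S m l y - S m l x

/-!
Both sides vanish at `0`, so it suffices to compare the increments from `x` to `x + 1`. Writing
`t = (-1)^σ(x)`, the blocks `[2x, 2x+2)` and `[4x, 4x+4)` carry the signs `t, -t` and
`t, -t, -t, t`, and which of their entries are divisible by `3` depends only on `x mod 3`;
checking the three residues gives the identity for `S_{3,·}(x)`, hence for intervals.
-/

lemma sigma2_two_mul (n : ℕ) : sigma2 (2 * n) = sigma2 n := by
  rcases Nat.eq_zero_or_pos n with rfl | hn
  · rfl
  · rw [sigma2, Nat.digits_def' one_lt_two (by omega)]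
    simp [sigma2]

lemma sigma2_two_mul_add_one (n : ℕ) : sigma2 (2 * n + 1) = sigma2 n + 1 := by
  rw [sigma2, Nat.digits_def' one_lt_two (by omega), show (2 * n + 1) / 2 = n by omega,
    show (2 * n + 1) % 2 = 1 by omega, List.sum_cons, add_comm, sigma2]

lemma S_succ (m l n : ℕ) :
    S m l (n + 1) = S m l n + if n % m = l then (-1 : ℤ) ^ sigma2 n else 0 := by
  unfold S
  rw [Finset.range_add_one, Finset.filter_insert]
  split
  · rw [Finset.sum_insert (by simp), add_comm]
  · rw [add_zero]

lemma S_two_mul_succ (m l n : ℕ) :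
    S m l (2 * (n + 1)) = S m l (2 * n) +
      ((if 2 * n % m = l then 1 else 0) - (if (2 * n + 1) % m = l then 1 else 0)) *
        (-1 : ℤ) ^ sigma2 n := by
  rw [show 2 * (n + 1) = 2 * n + 1 + 1 by ring, S_succ, S_succ,
    sigma2_two_mul, sigma2_two_mul_add_one, pow_succ]
  split_ifs <;> ring

lemma S_four_mul_succ (m l n : ℕ) :
    S m l (4 * (n + 1)) = S m l (4 * n) +
      ((if 4 * n % m = l then 1 else 0) - (if (4 * n + 1) % m = l then 1 else 0)
        - (if (4 * n + 2) % m = l then 1 else 0) + (if (4 * n + 3) % m = l then 1 else 0)) *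
        (-1 : ℤ) ^ sigma2 n := by
  rw [show 4 * (n + 1) = 2 * (2 * n + 1 + 1) by ring, S_two_mul_succ, S_two_mul_succ,
    sigma2_two_mul, sigma2_two_mul_add_one, pow_succ,
    show 2 * (2 * n) = 4 * n by ring, show 2 * (2 * n + 1) = 4 * n + 2 by ring]
  ring

lemma S_three_two_eq (x : ℕ) : S 3 2 x = S 3 0 x + S 3 0 (2 * x) - S 3 0 (4 * x) := by
  induction x with
  | zero => rfl
  | succ n ih =>
    rw [S_succ, S_succ, S_two_mul_succ, S_four_mul_succ, ih]
    generalize (-1 : ℤ) ^ sigma2 n = t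
    split_ifs <;> omega

theorem stmt_11_general (x y : ℕ) :
    Sint 3 2 x y = Sint 3 0 x y + Sint 3 0 (2 * x) (2 * y) - Sint 3 0 (4 * x) (4 * y) := by
  rw [Sint, Sint, Sint, Sint, S_three_two_eq x, S_three_two_eq y]
  ring

theorem stmt_11 (x y : ℕ) (hxy : x < y) :
    Sint 3 2 x y = Sint 3 0 x y + Sint 3 0 (2 * x) (2 * y) - Sint 3 0 (4 * x) (4 * y) :=
  stmt_11_general x y
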